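/- arXiv:0910.2557 — 5 statements merged into one kernel-verified Lean document; each statement's English description precedes it below -/
import Mathlib

section
/- Under the setup, y₁ = y₂. (In other words, two elements y₁, y₂ of A that are roots of 1 + y + y² + y³ + y⁴, congruent to 1 modulo the maximal ideal, and whose associated lifts σ₁ : t ↦ t/√(t² + y₁) and σ₂ : t ↦ t/√(t² + y₂) are conjugate by a substitution automorphism g ≡ t mod m of A⟦t⟧, must coincide.) -/
open PowerSeries

/-- Substitution (composition) of formal power series: `pscomp f g` is `f ∘ g`,
i.e. the series `∑ₖ fₖ gᵏ`, whose `n`-th coefficient is the (finitely supported,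
when the constant coefficient of `g` is nilpotent) sum `∑ᶠ k, fₖ · (coeff n gᵏ)`. -/
noncomputable def pscomp {A : Type*} [CommRing A] (f g : PowerSeries A) : PowerSeries A :=
  PowerSeries.mk fun n => ∑ᶠ k : ℕ, (coeff k f) * (coeff n (g ^ k))

/-!
Over `B = A[ω]/(ω² - (1 - y₂))` the element `ω` is nilpotent and `u₂(ω)² = ω² + y₂ = 1`, so
`u₂(ω) = 1`: `ω` is a fixed point of `σ₂ = X / u₂`, and since `σ₂' = y₂ / u₂³` its multiplier is
`y₂`. By the chain rule, and because `g'(ω)` is a unit, `p = g(ω)` is then a fixed point of `σ₁`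
with multiplier `y₂`; for `w = u₁(p)` this reads `w² = p² + y₁`, `p w = p` and `y₂ w³ = y₁`.
Writing `p = s₀ + s₁ ω` with `s₁` a unit, the `ω`-coordinates force `s₀ = 0` (this is where
`3` being a unit enters), then `w = 1`, and so `y₁ = y₂`.
-/

theorem eq_one_of_sq_eq_one_of_isNilpotent_sub_one {R : Type*} [CommRing R] (h2 : IsUnit (2 : R))
    {a : R} (ha : a ^ 2 = 1) (hn : IsNilpotent (a - 1)) : a = 1 := by
  have hunit : IsUnit (a + 1) := by
    have := hn.isUnit_add_right_of_commute h2 (Commute.all _ _)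
    rwa [show a - 1 + 2 = a + 1 by ring] at this
  rw [← sub_eq_zero]
  exact hunit.mul_left_cancel (by linear_combination ha)

namespace PowerSeries

section evalNil

variable {A T : Type*} [CommRing A] [CommRing T] [Algebra A T] {b : T} {N : ℕ}

/-- Evaluation of a power series at a nilpotent element, where the series is a finite sum.
For `b` not nilpotent the `finsum` may have infinite support and then takes the junk value `0`. -/
noncomputable def evalNil (b : T) (f : A⟦X⟧) : T :=
  ∑ᶠ n, coeff n f • b ^ n

theorem evalNil_eq_sum (hb : b ^ N = 0) (f : A⟦X⟧) :
    evalNil b f = ∑ n ∈ Finset.range N, coeff n f • b ^ n := by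
  refine finsum_eq_sum_of_support_subset _ fun n hn => ?_
  by_contra hnN
  simp only [Finset.coe_range, Set.mem_Iio, not_lt] at hnN
  simp [pow_eq_zero_of_le hnN hb] at hn

theorem evalNil_eq_aeval_trunc (hb : b ^ N = 0) (f : A⟦X⟧) :
    evalNil b f = Polynomial.aeval b (trunc N f) := by
  simp [evalNil_eq_sum hb, Polynomial.aeval_def, eval₂_trunc_eq_sum_range, Algebra.smul_def]

theorem aeval_trunc_coe (hb : b ^ N = 0) (p : Polynomial A) :
    Polynomial.aeval b (trunc N (p : A⟦X⟧)) = Polynomial.aeval b p := by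
  obtain ⟨q, hq⟩ : (Polynomial.X : Polynomial A) ^ N ∣ trunc N (p : A⟦X⟧) - p := by
    refine Polynomial.X_pow_dvd_iff.mpr fun d hd => ?_
    simp [coeff_trunc, hd]
  rw [← sub_eq_zero, ← map_sub, hq]
  simp [hb]

variable (hb : IsNilpotent b)
include hb

theorem evalNil_mul (f g : A⟦X⟧) : evalNil b (f * g) = evalNil b f * evalNil b g := by
  obtain ⟨N, hN⟩ := hb
  rw [evalNil_eq_aeval_trunc hN, evalNil_eq_aeval_trunc hN, evalNil_eq_aeval_trunc hN, ← map_mul,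
    ← trunc_trunc_mul_trunc, ← Polynomial.coe_mul, aeval_trunc_coe hN]

noncomputable def evalNilAlgHom : A⟦X⟧ →ₐ[A] T where
  toFun := evalNil b
  map_one' := by
    obtain ⟨N, hN⟩ := hb
    rw [evalNil_eq_aeval_trunc (pow_eq_zero_of_le N.le_succ hN), trunc_one, map_one]
  map_mul' := evalNil_mul hb
  map_zero' := by simp [evalNil]
  map_add' f g := by
    obtain ⟨N, hN⟩ := hb
    simp only [evalNil_eq_aeval_trunc hN, map_add]
  commutes' a := by
    obtain ⟨N, hN⟩ := hb
    rw [evalNil_eq_aeval_trunc (pow_eq_zero_of_le N.le_succ hN), algebraMap_apply,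
      Algebra.algebraMap_self, RingHom.id_apply, trunc_C, Polynomial.aeval_C]

theorem evalNil_add (f g : A⟦X⟧) : evalNil b (f + g) = evalNil b f + evalNil b g :=
  map_add (evalNilAlgHom hb) f g

theorem evalNil_sub (f g : A⟦X⟧) : evalNil b (f - g) = evalNil b f - evalNil b g :=
  map_sub (evalNilAlgHom hb) f g

theorem evalNil_pow (f : A⟦X⟧) (k : ℕ) : evalNil b (f ^ k) = evalNil b f ^ k :=
  map_pow (evalNilAlgHom hb) f k

theorem evalNil_X : evalNil b (X : A⟦X⟧) = b := by
  obtain ⟨N, hN⟩ := hb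
  rw [evalNil_eq_aeval_trunc (pow_eq_zero_of_le (N.le_add_right 2) hN), trunc_X, Polynomial.aeval_X]

theorem evalNil_C (a : A) : evalNil b (C a) = algebraMap A T a :=
  (evalNilAlgHom hb).commutes a

theorem evalNil_add_of_sq_eq_zero {e : T} (he : e ^ 2 = 0) (f : A⟦X⟧) :
    evalNil (b + e) f = evalNil b f + evalNil b (d⁄dX A f) * e := by
  obtain ⟨N, hN⟩ := hb
  have hbe : (b + e) ^ (N + 1) = 0 :=
    (Commute.all b e).add_pow_eq_zero_of_add_le_succ_of_pow_eq_zero hN he (by omega)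
  rw [evalNil_eq_aeval_trunc hbe, Polynomial.aeval_add_of_sq_eq_zero _ _ _ he, ← trunc_derivative,
    ← evalNil_eq_aeval_trunc hN, ← evalNil_eq_aeval_trunc (pow_eq_zero_of_le N.le_succ hN)]

theorem isNilpotent_evalNil_sub_constantCoeff (f : A⟦X⟧) :
    IsNilpotent (evalNil b f - algebraMap A T (constantCoeff f)) := by
  rw [← evalNil_C hb, ← evalNil_sub hb, sub_const_eq_X_mul_shift, evalNil_mul hb, evalNil_X hb]
  exact (Commute.all _ _).isNilpotent_mul_right hb

theorem isNilpotent_evalNil {f : A⟦X⟧} (hf : IsNilpotent (constantCoeff f)) :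
    IsNilpotent (evalNil b f) := by
  simpa using (Commute.all _ _).isNilpotent_add (isNilpotent_evalNil_sub_constantCoeff hb f)
    (hf.map (algebraMap A T))

theorem map_evalNil {D : Type*} [CommRing D] [Algebra A D] (χ : T →ₐ[A] D) (f : A⟦X⟧) :
    χ (evalNil b f) = evalNil (χ b) f := by
  obtain ⟨N, hN⟩ := hb
  rw [evalNil_eq_sum hN, evalNil_eq_sum (by rw [← map_pow, hN, map_zero]), map_sum]
  simp only [map_smul, map_pow]

theorem linearMap_evalNil_mem (ℓ : T →ₗ[A] A) {I : Ideal A} {f : A⟦X⟧} (hf : ∀ n, coeff n f ∈ I) :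
    ℓ (evalNil b f) ∈ I := by
  obtain ⟨N, hN⟩ := hb
  rw [evalNil_eq_sum hN, map_sum]
  exact I.sum_mem fun n _ => by rw [map_smul, smul_eq_mul]; exact I.mul_mem_right _ (hf n)

end evalNil

theorem coeff_pow_eq_zero_of_constantCoeff_pow {A : Type*} [CommRing A] {g : A⟦X⟧} {M : ℕ}
    (hM : constantCoeff g ^ M = 0) {n k : ℕ} (hk : n + M ≤ k) : coeff n (g ^ k) = 0 := by
  obtain ⟨h, hh⟩ : X ∣ g - C (constantCoeff g) := X_dvd_iff.mpr (by simp)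
  rw [show g = X * h + C (constantCoeff g) by rw [← hh]; ring, add_pow, map_sum]
  refine Finset.sum_eq_zero fun j _ => ?_
  rcases le_or_gt j n with hjn | hjn
  · rw [← map_pow, pow_eq_zero_of_le (by omega) hM, map_zero]
    simp
  · rw [mul_pow, mul_assoc, mul_assoc, coeff_X_pow_mul', if_neg (by omega)]

section pscomp

variable {A T : Type*} [CommRing A] [CommRing T] [Algebra A T] {b : T}

theorem evalNil_pscomp (hb : IsNilpotent b) {f g : A⟦X⟧} (hg : IsNilpotent (constantCoeff g)) :
    evalNil b (pscomp f g) = evalNil (evalNil b g) f := by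
  obtain ⟨M, hM⟩ := hg
  obtain ⟨N, hN⟩ := hb
  obtain ⟨K, hK⟩ := isNilpotent_evalNil ⟨N, hN⟩ ⟨M, hM⟩ (b := b) (f := g)
  have hL : evalNil b g ^ (N + M + K) = 0 := pow_eq_zero_of_le (by omega) hK
  have hcoeff : ∀ n < N, coeff n (pscomp f g)
      = ∑ k ∈ Finset.range (N + M + K), coeff k f * coeff n (g ^ k) := fun n hn => by
    rw [pscomp, coeff_mk]
    refine finsum_eq_sum_of_support_subset _ fun k hk => ?_
    by_contra hkL
    simp only [Finset.coe_range, Set.mem_Iio, not_lt] at hkL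
    simp [coeff_pow_eq_zero_of_constantCoeff_pow hM (by omega : n + M ≤ k)] at hk
  calc evalNil b (pscomp f g)
      = ∑ n ∈ Finset.range N, ∑ k ∈ Finset.range (N + M + K),
          coeff k f • (coeff n (g ^ k) • b ^ n) := by
        rw [evalNil_eq_sum hN]
        refine Finset.sum_congr rfl fun n hn => ?_
        rw [hcoeff n (Finset.mem_range.mp hn), Finset.sum_smul]
        simp only [mul_smul]
    _ = ∑ k ∈ Finset.range (N + M + K), coeff k f • evalNil b (g ^ k) := by
        rw [Finset.sum_comm]
        simp only [evalNil_eq_sum hN, Finset.smul_sum]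
    _ = evalNil (evalNil b g) f := by
        simp only [evalNil_eq_sum hL, evalNil_pow ⟨N, hN⟩]

open DualNumber TrivSqZeroExt in
theorem evalNil_derivative_pscomp (hb : IsNilpotent b) {f g : A⟦X⟧}
    (hg : IsNilpotent (constantCoeff g)) :
    evalNil b (d⁄dX A (pscomp f g)) = evalNil (evalNil b g) (d⁄dX A f) * evalNil b (d⁄dX A g) := by
  -- expand `(f ∘ g)(b + ε)` over the dual numbers in two ways and compare `ε`-coefficients
  let ι := inlAlgHom A T T
  have hε : (ε : DualNumber T) ^ 2 = 0 := by rw [sq, eps_mul_eps]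
  have hιb : IsNilpotent (ι b) := hb.map ι
  have hδε : (ι (evalNil b (d⁄dX A g)) * ε) ^ 2 = 0 := by rw [mul_pow, hε, mul_zero]
  have hexpand : ∀ h : A⟦X⟧,
      evalNil (ι b + ε) h = ι (evalNil b h) + ι (evalNil b (d⁄dX A h)) * ε := fun h => by
    rw [evalNil_add_of_sq_eq_zero hιb hε, map_evalNil hb, map_evalNil hb]
  have key := evalNil_pscomp ((Commute.all _ _).isNilpotent_add hιb ⟨2, hε⟩) (f := f) hg
  rw [hexpand, hexpand, evalNil_add_of_sq_eq_zero ((isNilpotent_evalNil hb hg).map ι) hδε,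
    ← map_evalNil (isNilpotent_evalNil hb hg), ← map_evalNil (isNilpotent_evalNil hb hg)] at key
  simpa [ι] using congrArg snd key

end pscomp

section sqrt

-- `u = √(X² + y)` and `σ = X / u`
variable {A : Type*} [CommRing A] {y : A} {u σ : A⟦X⟧} (hu : u ^ 2 = X ^ 2 + C y) (hσ : σ * u = X)
include hu hσ

theorem derivative_div_sqrt_mul_pow_three (h2 : IsUnit (2 : A)) : d⁄dX A σ * u ^ 3 = C y := by
  have h2' : IsUnit (2 : A⟦X⟧) := by simpa only [map_ofNat] using h2.map (C (R := A))
  have huu : u * d⁄dX A u = X := by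
    have := congrArg (d⁄dX A) hu
    simp only [Derivation.leibniz_pow, map_add, derivative_C, derivative_X, add_zero] at this
    exact h2'.mul_left_cancel (by linear_combination this)
  have hσu : d⁄dX A σ * u + σ * d⁄dX A u = 1 := by
    simpa [Derivation.leibniz, mul_comm, add_comm] using congrArg (d⁄dX A) hσ
  linear_combination u ^ 2 * hσu - u * d⁄dX A u * hσ - X * huu + hu

variable {T : Type*} [CommRing T] [Algebra A T] {q : T} (hq : IsNilpotent q)
include hq

omit hσ in
theorem evalNil_sqrt_sq : evalNil q u ^ 2 = q ^ 2 + algebraMap A T y := by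
  rw [← evalNil_pow hq, hu, evalNil_add hq, evalNil_pow hq, evalNil_X hq, evalNil_C hq]

omit hu in
theorem evalNil_div_sqrt_mul : evalNil q σ * evalNil q u = q := by
  rw [← evalNil_mul hq, hσ, evalNil_X hq]

theorem evalNil_derivative_div_sqrt_mul (h2 : IsUnit (2 : A)) :
    evalNil q (d⁄dX A σ) * evalNil q u ^ 3 = algebraMap A T y := by
  rw [← evalNil_pow hq, ← evalNil_mul hq, derivative_div_sqrt_mul_pow_three hu hσ h2, evalNil_C hq]

end sqrt

theorem isNilpotent_constantCoeff_of_mul_eq_X {A : Type*} [CommRing A] {σ u : A⟦X⟧}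
    (hu : IsNilpotent (constantCoeff u - 1)) (hσ : σ * u = X) : IsNilpotent (constantCoeff σ) := by
  have hunit : IsUnit (constantCoeff u) := by simpa using hu.isUnit_add_one
  have hσ0 : constantCoeff σ = 0 := by
    simpa [hunit.mul_left_eq_zero] using congrArg constantCoeff hσ
  exact hσ0 ▸ IsNilpotent.zero

section conjugation

variable {A T : Type*} [CommRing A] [CommRing T] [Algebra A T] (h2 : IsUnit (2 : A))
  {y : A} {u σ : A⟦X⟧} (hu : u ^ 2 = X ^ 2 + C y) (hσ : σ * u = X)
  (hu0 : IsNilpotent (constantCoeff u - 1))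
  {x : T} (hx : IsNilpotent x) (hx2 : x ^ 2 + algebraMap A T y = 1)
include h2 hu hσ hu0 hx hx2

omit hσ in
theorem evalNil_sqrt_eq_one : evalNil x u = 1 := by
  refine eq_one_of_sq_eq_one_of_isNilpotent_sub_one
    (by simpa only [map_ofNat] using h2.map (algebraMap A T)) ?_ ?_
  · rw [evalNil_sqrt_sq hu hx, hx2]
  · simpa using (Commute.all _ _).isNilpotent_add (isNilpotent_evalNil_sub_constantCoeff hx u)
      (hu0.map (algebraMap A T))

theorem evalNil_div_sqrt_eq_self : evalNil x σ = x := by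
  simpa [evalNil_sqrt_eq_one h2 hu hu0 hx hx2] using evalNil_div_sqrt_mul hσ hx

theorem evalNil_derivative_div_sqrt : evalNil x (d⁄dX A σ) = algebraMap A T y := by
  simpa [evalNil_sqrt_eq_one h2 hu hu0 hx hx2] using evalNil_derivative_div_sqrt_mul hu hσ hx h2

variable {σ' g : A⟦X⟧} (hg : IsNilpotent (constantCoeff g)) (hconj : pscomp σ' g = pscomp g σ)
include hg hconj

theorem evalNil_conj_eq_self : evalNil (evalNil x g) σ' = evalNil x g := by
  rw [← evalNil_pscomp hx hg, hconj,
    evalNil_pscomp hx (isNilpotent_constantCoeff_of_mul_eq_X hu0 hσ),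
    evalNil_div_sqrt_eq_self h2 hu hσ hu0 hx hx2]

theorem evalNil_derivative_conj (hg1 : IsNilpotent (coeff 1 g - 1)) :
    evalNil (evalNil x g) (d⁄dX A σ') = algebraMap A T y := by
  have hδ : IsUnit (evalNil x (d⁄dX A g)) := by
    have h1 : constantCoeff (d⁄dX A g) = coeff 1 g := by
      simp [← coeff_zero_eq_constantCoeff_apply, coeff_derivative]
    have := (Commute.all _ _).isNilpotent_add
      (isNilpotent_evalNil_sub_constantCoeff hx (d⁄dX A g)) (hg1.map (algebraMap A T))
    simpa [h1] using this.isUnit_add_one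
  have := congrArg (fun f => evalNil x (d⁄dX A f)) hconj
  simp only [evalNil_derivative_pscomp hx hg,
    evalNil_derivative_pscomp hx (isNilpotent_constantCoeff_of_mul_eq_X hu0 hσ),
    evalNil_div_sqrt_eq_self h2 hu hσ hu0 hx hx2,
    evalNil_derivative_div_sqrt h2 hu hσ hu0 hx hx2] at this
  exact hδ.mul_right_cancel (by rw [this, mul_comm])

end conjugation

end PowerSeries

namespace QuadraticAlgebra

open scoped QuadraticAlgebra

theorem omega_sq {A : Type*} [CommRing A] {d : A} :
    (ω : QuadraticAlgebra A d 0) ^ 2 = algebraMap A _ d := by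
  rw [sq, omega_mul_omega_eq_algebraMap, map_zero, zero_mul, add_zero]

theorem isNilpotent_omega {A : Type*} [CommRing A] {d : A} (hd : IsNilpotent d) :
    IsNilpotent (ω : QuadraticAlgebra A d 0) := by
  obtain ⟨n, hn⟩ := hd
  exact ⟨2 * n, by rw [pow_mul, omega_sq, ← map_pow, hn, map_zero]⟩

theorem evalNil_omega_mem {A : Type*} [CommRing A] {d : A} {I : Ideal A} {g : A⟦X⟧}
    (hd : IsNilpotent d) (hg : ∀ n, coeff n (g - X) ∈ I) :
    (PowerSeries.evalNil (ω : QuadraticAlgebra A d 0) g).re ∈ I ∧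
      (PowerSeries.evalNil (ω : QuadraticAlgebra A d 0) g).im - 1 ∈ I := by
  have hω := isNilpotent_omega hd
  have hre := PowerSeries.linearMap_evalNil_mem hω (reₗ d 0) hg
  have him := PowerSeries.linearMap_evalNil_mem hω (imₗ d 0) hg
  rw [PowerSeries.evalNil_sub hω, PowerSeries.evalNil_X hω] at hre him
  simpa using And.intro hre him

open IsLocalRing in
theorem eq_of_isFixedPt_of_multiplier {A : Type*} [CommRing A] [IsLocalRing A]
    {d y₁ y₂ : A} (h2 : IsUnit (2 : A)) (h3 : IsUnit (3 : A)) (hd : d ∈ maximalIdeal A)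
    (hy₁ : y₁ - 1 ∈ maximalIdeal A) (hy₂ : y₂ - 1 ∈ maximalIdeal A)
    {p w : QuadraticAlgebra A d 0} (hp₀ : p.re ∈ maximalIdeal A) (hp₁ : p.im - 1 ∈ maximalIdeal A)
    (hw : w ^ 2 = p ^ 2 + algebraMap A _ y₁) (hpw : p * w = p)
    (hmult : algebraMap A _ y₂ * w ^ 3 = algebraMap A _ y₁) : y₁ = y₂ := by
  have hres : ∀ {a : A}, a - 1 ∈ maximalIdeal A → residue A a = 1 := fun ha => by
    rwa [← residue_eq_zero_iff, map_sub, map_one, sub_eq_zero] at ha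
  have hunit : ∀ {a : A}, a - 1 ∈ maximalIdeal A → IsUnit a := fun ha =>
    (residue_ne_zero_iff_isUnit _).mp (by simp [hres ha])
  -- `y₂ w³ = y₂ w (p² + y₁)` and `p w = p` express `w` through `p²`
  have hlin : algebraMap A _ y₁ = algebraMap A _ y₂ * p ^ 2 + algebraMap A _ (y₁ * y₂) * w := by
    rw [map_mul]
    linear_combination -hmult + algebraMap A _ y₂ * w * hw + algebraMap A _ y₂ * p * hpw
  have hre := congrArg QuadraticAlgebra.re hlin
  have him := congrArg QuadraticAlgebra.im hlin
  have hwim := congrArg QuadraticAlgebra.im hw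
  have hpwim := congrArg QuadraticAlgebra.im hpw
  simp only [algebraMap_re, algebraMap_im, sq, map_mul, re_add, re_mul, im_add, im_mul, mul_zero,
    zero_mul, add_zero] at hre him hwim hpwim
  have hwre : residue A w.re = 1 := by
    simpa [hres hy₁, hres hy₂, (residue_eq_zero_iff _).mpr hp₀, (residue_eq_zero_iff _).mpr hd]
      using (congrArg (residue A) hre).symm
  have hF : IsUnit (2 * w.re + y₁) := by
    have h3res : residue A (2 * w.re + y₁) = residue A 3 := by
      simp only [map_add, map_mul, map_ofNat, hwre, hres hy₁]
      norm_num
    exact (residue_ne_zero_iff_isUnit _).mp (h3res ▸ (residue_ne_zero_iff_isUnit _).mpr h3)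
  have hp₀' : p.re = 0 := by
    have hprod : (y₂ * (2 * p.im * (2 * w.re + y₁))) * p.re = 0 := by
      linear_combination (-2 * w.re) * him - y₁ * y₂ * hwim
    exact ((hunit hy₂).mul ((h2.mul (hunit hp₁)).mul hF)).mul_right_eq_zero.mp hprod
  have hwim' : w.im = 0 := by
    have hprod : (y₁ * y₂) * w.im = 0 := by linear_combination -him - 2 * y₂ * p.im * hp₀'
    exact ((hunit hy₁).mul (hunit hy₂)).mul_right_eq_zero.mp hprod
  have hw1 : w = 1 := by
    ext
    · rw [QuadraticAlgebra.re_one]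
      exact (hunit hp₁).mul_left_cancel (by linear_combination hpwim - w.im * hp₀')
    · exact hwim'
  simpa [hw1] using congrArg QuadraticAlgebra.re hmult |>.symm

end QuadraticAlgebra

theorem universality_y1_eq_y2_general {A : Type*} [CommRing A] [IsLocalRing A] [IsArtinianRing A]
    (h5 : (5 : A) ∈ IsLocalRing.maximalIdeal A)
    (y₁ y₂ : A)
    (hy₁m : y₁ - 1 ∈ IsLocalRing.maximalIdeal A)
    (hy₂m : y₂ - 1 ∈ IsLocalRing.maximalIdeal A)
    (u₁ u₂ σ₁ σ₂ g : PowerSeries A)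
    (hu₁ : u₁ ^ 2 = X ^ 2 + C y₁)
    (hu₂ : u₂ ^ 2 = X ^ 2 + C y₂)
    (hu₂0 : constantCoeff u₂ - 1 ∈ IsLocalRing.maximalIdeal A)
    (hσ₁ : σ₁ * u₁ = X)
    (hσ₂ : σ₂ * u₂ = X)
    (hg0 : coeff 0 g ∈ IsLocalRing.maximalIdeal A)
    (hg1 : coeff 1 g - 1 ∈ IsLocalRing.maximalIdeal A)
    (hgn : ∀ n, 2 ≤ n → coeff n g ∈ IsLocalRing.maximalIdeal A)
    (hconj : pscomp σ₁ g = pscomp g σ₂) :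
    y₁ = y₂ := by
  have hnil : ∀ a ∈ IsLocalRing.maximalIdeal A, IsNilpotent a := fun _ ha =>
    Ring.KrullDimLE.isNilpotent_iff_mem_nonunits.mpr ha
  obtain ⟨h2, h3⟩ : IsUnit (2 : A) ∧ IsUnit (3 : A) := IsUnit.mul_iff.mp <| by
    simpa [show (2 : A) * 3 = 5 + 1 by norm_num] using (hnil 5 h5).isUnit_add_one
  have hd : 1 - y₂ ∈ IsLocalRing.maximalIdeal A := by simpa using neg_mem hy₂m
  have hω := QuadraticAlgebra.isNilpotent_omega (hnil _ hd)
  have hω2 :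
      (QuadraticAlgebra.omega : QuadraticAlgebra A (1 - y₂) 0) ^ 2 + algebraMap A _ y₂ = 1 := by
    rw [QuadraticAlgebra.omega_sq, ← map_add, sub_add_cancel, map_one]
  have hu₂0' := hnil _ hu₂0
  have hg0' : IsNilpotent (constantCoeff g) :=
    hnil _ (by rwa [← coeff_zero_eq_constantCoeff_apply])
  have hp := PowerSeries.isNilpotent_evalNil hω hg0'
  have hfix := PowerSeries.evalNil_conj_eq_self h2 hu₂ hσ₂ hu₂0' hω hω2 hg0' hconj
  have hder := PowerSeries.evalNil_derivative_conj h2 hu₂ hσ₂ hu₂0' hω hω2 hg0' hconj (hnil _ hg1)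
  obtain ⟨hp₀, hp₁⟩ :=
    QuadraticAlgebra.evalNil_omega_mem (hnil _ hd) (I := IsLocalRing.maximalIdeal A) fun n => by
      rcases n with _ | _ | n
      · simpa using hg0
      · simpa using hg1
      · simpa [coeff_X] using hgn (n + 2) (by omega)
  refine QuadraticAlgebra.eq_of_isFixedPt_of_multiplier h2 h3 hd hy₁m hy₂m hp₀ hp₁
    (PowerSeries.evalNil_sqrt_sq hu₁ hp) ?_ ?_
  · simpa [hfix] using PowerSeries.evalNil_div_sqrt_mul hσ₁ hp
  · simpa [hder] using PowerSeries.evalNil_derivative_div_sqrt_mul hu₁ hσ₁ hp h2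

theorem universality_y1_eq_y2 {A : Type*} [CommRing A] [IsLocalRing A] [IsArtinianRing A]
    (h5 : (5 : A) ∈ IsLocalRing.maximalIdeal A)
    (y₁ y₂ : A)
    (hy₁ : 1 + y₁ + y₁ ^ 2 + y₁ ^ 3 + y₁ ^ 4 = 0)
    (hy₂ : 1 + y₂ + y₂ ^ 2 + y₂ ^ 3 + y₂ ^ 4 = 0)
    (hy₁m : y₁ - 1 ∈ IsLocalRing.maximalIdeal A)
    (hy₂m : y₂ - 1 ∈ IsLocalRing.maximalIdeal A)
    (u₁ u₂ σ₁ σ₂ g : PowerSeries A)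
    (hu₁ : u₁ ^ 2 = X ^ 2 + C y₁)
    (hu₂ : u₂ ^ 2 = X ^ 2 + C y₂)
    (hu₁0 : constantCoeff u₁ - 1 ∈ IsLocalRing.maximalIdeal A)
    (hu₂0 : constantCoeff u₂ - 1 ∈ IsLocalRing.maximalIdeal A)
    (hσ₁ : σ₁ * u₁ = X)
    (hσ₂ : σ₂ * u₂ = X)
    (hg0 : coeff 0 g ∈ IsLocalRing.maximalIdeal A)
    (hg1 : coeff 1 g - 1 ∈ IsLocalRing.maximalIdeal A)
    (hgn : ∀ n, 2 ≤ n → coeff n g ∈ IsLocalRing.maximalIdeal A)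
    (hconj : pscomp σ₁ g = pscomp g σ₂) :
    y₁ = y₂ :=
  universality_y1_eq_y2_general h5 y₁ y₂ hy₁m hy₂m u₁ u₂ σ₁ σ₂ g hu₁ hu₂ hu₂0 hσ₁ hσ₂ hg0 hg1 hgn
    hconj
end

section
/- Under the setup, comparison of the coefficients of t on both sides of the identity σ₁ ∘ g = g ∘ σ₂ yields a₁·s⁻¹ − a₀²·a₁·s⁻³ = a₁·r⁻¹ (this is the paper's equation a₁/√(a₀² + y₁) − a₀²a₁/(a₀² + y₁)^{3/2} = a₁/√(y₂)). -/
/-!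
`pscomp` agrees with Mathlib's `PowerSeries.subst`, and substituting a series with nilpotent
constant term is a ring homomorphism. Substituting `g` into `σ₁ u₁ = t` and `u₁² = t² + y₁`
gives `v w = g` and `w² = g² + y₁` for `v = σ₁ ∘ g`, `w = u₁ ∘ g`; comparing constant and
linear coefficients (with `2` invertible) gives `v₁ = a₁ s⁻¹ − a₀² a₁ s⁻³`. On the other side
`σ₂ = t u₂⁻¹` has no constant term and linear coefficient `r⁻¹`, so the linear coefficient
of `g ∘ σ₂` is `a₁ r⁻¹`.
-/

open PowerSeries

open IsLocalRing

section PowerSeries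

variable {A : Type*} [CommRing A]

theorem pscomp_eq_subst (f : A⟦X⟧) {g : A⟦X⟧} (hg : HasSubst g) : pscomp f g = f.subst g := by
  ext n
  rw [pscomp, coeff_mk, coeff_subst' hg]
  rfl

theorem coeff_one_subst_of_constantCoeff_eq_zero (f : A⟦X⟧) {g : A⟦X⟧}
    (hg : constantCoeff g = 0) : coeff 1 (f.subst g) = coeff 1 f * coeff 1 g := by
  rw [coeff_subst' (.of_constantCoeff_zero' hg), finsum_eq_single _ 1]
  · simp
  · intro k hk
    rw [coeff_one_pow, hg, smul_eq_mul]
    rcases k with _ | _ | k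
    · simp
    · contradiction
    · simp

theorem constantCoeff_eq_zero_of_mul_eq_X {σ u : A⟦X⟧} (h : σ * u = X)
    (hu : IsUnit (constantCoeff u)) : constantCoeff σ = 0 := by
  have h0 := congrArg constantCoeff h
  rw [map_mul, constantCoeff_X] at h0
  exact hu.mul_left_eq_zero.mp h0

theorem coeff_one_eq_inverse_of_mul_eq_X {σ u : A⟦X⟧} (h : σ * u = X)
    (hu : IsUnit (constantCoeff u)) : coeff 1 σ = Ring.inverse (constantCoeff u) := by
  have h1 := congrArg (coeff 1) h
  rw [coeff_one_mul, constantCoeff_eq_zero_of_mul_eq_X h hu, mul_zero, add_zero,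
    coeff_one_X] at h1
  rw [← Ring.mul_inverse_cancel_right _ (coeff 1 σ) hu, h1, one_mul]

theorem coeff_one_eq_of_mul_eq_of_sq_eq {v w g : A⟦X⟧} {y : A} (h2 : IsUnit (2 : A))
    (hw : IsUnit (constantCoeff w)) (hvw : v * w = g) (hw2 : w ^ 2 = g ^ 2 + C y) :
    coeff 1 v = coeff 1 g * Ring.inverse (constantCoeff w)
      - coeff 0 g ^ 2 * coeff 1 g * Ring.inverse (constantCoeff w) ^ 3 := by
  set s := constantCoeff w
  set i := Ring.inverse s
  rw [coeff_zero_eq_constantCoeff_apply]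
  have eq0 : constantCoeff v * s = constantCoeff g := by rw [← map_mul, hvw]
  have eq1 : coeff 1 v * s + coeff 1 w * constantCoeff v = coeff 1 g := by
    rw [← coeff_one_mul, hvw]
  have eq2 : s * coeff 1 w = constantCoeff g * coeff 1 g := by
    have h := congrArg (coeff 1) hw2
    rw [map_add, coeff_one_pow, coeff_one_pow, coeff_succ_C] at h
    apply h2.mul_left_cancel
    linear_combination h
  have cleared : coeff 1 v * s ^ 3 = coeff 1 g * s ^ 2 - constantCoeff g ^ 2 * coeff 1 g := by
    linear_combination s ^ 2 * eq1 - coeff 1 w * s * eq0 - constantCoeff g * eq2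
  have hsi : s * i = 1 := Ring.mul_inverse_cancel s hw
  linear_combination i ^ 3 * cleared
    + (coeff 1 g * i * (1 + s * i) - coeff 1 v * (1 + s * i + s ^ 2 * i ^ 2)) * hsi

end PowerSeries

section LocalRing

variable {A : Type*} [CommRing A] [IsLocalRing A]

theorem isUnit_of_sub_one_mem_maximalIdeal {x : A} (hx : x - 1 ∈ maximalIdeal A) : IsUnit x :=
  isUnit_of_mem_nonunits_one_sub_self x (by simpa using (maximalIdeal A).neg_mem hx)

theorem isUnit_two_of_five_mem_maximalIdeal (h5 : (5 : A) ∈ maximalIdeal A) : IsUnit (2 : A) :=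
  isUnit_of_mul_isUnit_left (y := 3) <| isUnit_of_sub_one_mem_maximalIdeal (by norm_num [h5])

end LocalRing

theorem linear_coefficient_comparison_general {A : Type*} [CommRing A] [IsLocalRing A] [IsArtinianRing A]
    (h5 : (5 : A) ∈ IsLocalRing.maximalIdeal A)
    (y₁ : A)
    (hy₁m : y₁ - 1 ∈ IsLocalRing.maximalIdeal A)
    (u₁ u₂ σ₁ σ₂ g : PowerSeries A)
    (hu₁ : u₁ ^ 2 = X ^ 2 + C y₁)
    (hu₂0 : constantCoeff u₂ - 1 ∈ IsLocalRing.maximalIdeal A)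
    (hσ₁ : σ₁ * u₁ = X)
    (hσ₂ : σ₂ * u₂ = X)
    (hg0 : coeff 0 g ∈ IsLocalRing.maximalIdeal A)
    (hconj : pscomp σ₁ g = pscomp g σ₂) :
    coeff 1 g * Ring.inverse (constantCoeff (pscomp u₁ g))
      - (coeff 0 g) ^ 2 * coeff 1 g * (Ring.inverse (constantCoeff (pscomp u₁ g))) ^ 3
      = coeff 1 g * Ring.inverse (constantCoeff u₂) := by
  rw [coeff_zero_eq_constantCoeff_apply] at hg0
  have hg : HasSubst g := Ring.KrullDimLE.isNilpotent_iff_mem_maximalIdeal.mpr hg0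
  have hr : IsUnit (constantCoeff u₂) := isUnit_of_sub_one_mem_maximalIdeal hu₂0
  have hσ₂0 := constantCoeff_eq_zero_of_mul_eq_X hσ₂ hr
  rw [pscomp_eq_subst _ hg, pscomp_eq_subst _ (.of_constantCoeff_zero' hσ₂0)] at hconj
  rw [pscomp_eq_subst _ hg]
  have hvw : σ₁.subst g * u₁.subst g = g := by rw [← subst_mul hg, hσ₁, subst_X hg]
  have hw2 : (u₁.subst g) ^ 2 = g ^ 2 + C y₁ := by
    rw [← subst_pow hg, hu₁, subst_add hg, subst_pow hg, subst_X hg, subst_C, ← C_apply]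
  have hs : IsUnit (constantCoeff (u₁.subst g)) := by
    refine (isUnit_pow_iff two_ne_zero).mp (isUnit_of_sub_one_mem_maximalIdeal ?_)
    rw [← map_pow, hw2, map_add, map_pow, constantCoeff_C, add_sub_assoc]
    exact add_mem (Ideal.pow_mem_of_mem _ hg0 2 two_pos) hy₁m
  rw [← coeff_one_eq_inverse_of_mul_eq_X hσ₂ hr, ← coeff_one_subst_of_constantCoeff_eq_zero _ hσ₂0,
    ← hconj]
  exact (coeff_one_eq_of_mul_eq_of_sq_eq (isUnit_two_of_five_mem_maximalIdeal h5) hs hvw hw2).symm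

theorem linear_coefficient_comparison {A : Type*} [CommRing A] [IsLocalRing A] [IsArtinianRing A]
    (h5 : (5 : A) ∈ IsLocalRing.maximalIdeal A)
    (y₁ y₂ : A)
    (hy₁ : 1 + y₁ + y₁ ^ 2 + y₁ ^ 3 + y₁ ^ 4 = 0)
    (hy₂ : 1 + y₂ + y₂ ^ 2 + y₂ ^ 3 + y₂ ^ 4 = 0)
    (hy₁m : y₁ - 1 ∈ IsLocalRing.maximalIdeal A)
    (hy₂m : y₂ - 1 ∈ IsLocalRing.maximalIdeal A)
    (u₁ u₂ σ₁ σ₂ g : PowerSeries A)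
    (hu₁ : u₁ ^ 2 = X ^ 2 + C y₁)
    (hu₂ : u₂ ^ 2 = X ^ 2 + C y₂)
    (hu₁0 : constantCoeff u₁ - 1 ∈ IsLocalRing.maximalIdeal A)
    (hu₂0 : constantCoeff u₂ - 1 ∈ IsLocalRing.maximalIdeal A)
    (hσ₁ : σ₁ * u₁ = X)
    (hσ₂ : σ₂ * u₂ = X)
    (hg0 : coeff 0 g ∈ IsLocalRing.maximalIdeal A)
    (hg1 : coeff 1 g - 1 ∈ IsLocalRing.maximalIdeal A)
    (hgn : ∀ n, 2 ≤ n → coeff n g ∈ IsLocalRing.maximalIdeal A)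
    (hconj : pscomp σ₁ g = pscomp g σ₂) :
    coeff 1 g * Ring.inverse (constantCoeff (pscomp u₁ g))
      - (coeff 0 g) ^ 2 * coeff 1 g * (Ring.inverse (constantCoeff (pscomp u₁ g))) ^ 3
      = coeff 1 g * Ring.inverse (constantCoeff u₂) :=
  linear_coefficient_comparison_general h5 y₁ hy₁m u₁ u₂ σ₁ σ₂ g hu₁ hu₂0 hσ₁ hσ₂ hg0 hconj
end

section
/- Let A be a commutative local ring with maximal ideal m in which 2 and 3 are invertible. Let a₀ ∈ m, let a₁, s, r be units of A, and let a₂, y₁, y₂ ∈ A. Assume: (i) s² = a₀² + y₁; (ii) r² = y₂; (iii) a₀·s = a₀; (iv) a₁·s⁻¹ − a₀²·a₁·s⁻³ = a₁·r⁻¹; and (v) a₂·r⁻¹·(r⁻¹ − 1) = (3/2)·(a₀² − 1)·a₀·a₁² (with 3/2 = 3·2⁻¹). Then y₁ = y₂. -/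
/-!
Cancelling the unit `a₁` in (iv) and using `a₀ s⁻¹ = a₀` (from (iii)) gives `s⁻¹ - r⁻¹ = a₀²`;
multiplying by `a₀` gives `a₀ (1 - r⁻¹) = a₀³`. Since the right-hand side of (v) is a unit times
`a₀`, we have `a₀ = c (r⁻¹ - 1)`, hence `a₀² = -c a₀³`, so `a₀² (1 + c a₀) = 0` and `a₀² = 0`
because `1 + c a₀` is a unit. Then `s⁻¹ = r⁻¹`, so `s = r` and `y₁ = s² - a₀² = r² = y₂`.
-/

namespace IsLocalRing

variable {A : Type*} [CommRing A] [IsLocalRing A]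

theorem isUnit_sub_one_of_mem_maximalIdeal {x : A} (hx : x ∈ maximalIdeal A) :
    IsUnit (x - 1) := by
  simpa using (isUnit_one_sub_self_of_mem_nonunits x ((mem_maximalIdeal x).1 hx)).neg

theorem eq_zero_of_eq_mul_of_mem_maximalIdeal {x y : A} (hx : x ∈ maximalIdeal A)
    (h : y = y * x) : y = 0 :=
  (isUnit_sub_one_of_mem_maximalIdeal hx).mul_left_eq_zero.1 (by linear_combination -h)

theorem sq_eq_zero_of_sub_eq_sq {a t u : A} (ha : a ∈ maximalIdeal A) (hat : a * t = a)
    (htu : t - u = a ^ 2) (hdvd : u - 1 ∣ a) : a ^ 2 = 0 := by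
  obtain ⟨c, hc⟩ := hdvd
  have hcube : a * (1 - u) = a ^ 3 := by linear_combination a * htu - hat
  refine eq_zero_of_eq_mul_of_mem_maximalIdeal (neg_mem (Ideal.mul_mem_left _ c ha)) ?_
  linear_combination a * hc - c * hcube

end IsLocalRing

open IsLocalRing

theorem ring_theoretic_core {A : Type*} [CommRing A] [IsLocalRing A]
    (h2 : IsUnit (2 : A)) (h3 : IsUnit (3 : A))
    (a₀ : A) (ha₀ : a₀ ∈ IsLocalRing.maximalIdeal A)
    (a₁ s r : Aˣ) (a₂ y₁ y₂ : A)
    (hs : (s : A) ^ 2 = a₀ ^ 2 + y₁)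
    (hr : (r : A) ^ 2 = y₂)
    (hiii : a₀ * s = a₀)
    (hiv : (a₁ : A) * (↑s⁻¹ : A) - a₀ ^ 2 * (a₁ : A) * (↑s⁻¹ : A) ^ 3 = (a₁ : A) * (↑r⁻¹ : A))
    (hv : a₂ * (↑r⁻¹ : A) * ((↑r⁻¹ : A) - 1)
      = 3 * Ring.inverse (2 : A) * (a₀ ^ 2 - 1) * a₀ * (a₁ : A) ^ 2) :
    y₁ = y₂ := by
  have hs₀ : a₀ * ↑s⁻¹ = a₀ := s.mul_inv_eq_iff_eq_mul.2 hiii.symm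
  have h4 : (↑s⁻¹ : A) - ↑r⁻¹ = a₀ ^ 2 := by
    refine sub_eq_zero.1 (a₁.isUnit.mul_right_eq_zero.1 ?_)
    linear_combination hiv + a₀ * a₁ * ((↑s⁻¹ : A) ^ 2 + ↑s⁻¹ + 1) * hs₀
  have hdvd : (↑r⁻¹ : A) - 1 ∣ a₀ := by
    have hw : IsUnit (3 * Ring.inverse (2 : A) * (a₀ ^ 2 - 1) * (a₁ : A) ^ 2) :=
      ((h3.mul h2.ringInverse).mul (isUnit_sub_one_of_mem_maximalIdeal
        (Ideal.pow_mem_of_mem _ ha₀ 2 two_pos))).mul (a₁.isUnit.pow 2)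
    exact hw.dvd_mul_left.1 ⟨a₂ * ↑r⁻¹, by linear_combination -hv⟩
  have ha₀sq : a₀ ^ 2 = 0 := sq_eq_zero_of_sub_eq_sq ha₀ hs₀ h4 hdvd
  have hsr : s = r := inv_inj.1 (Units.ext (by linear_combination h4 + ha₀sq))
  rw [← hr, ← hsr]
  linear_combination -ha₀sq - hs
end

section
/- Let A be a commutative local ring with maximal ideal m in which 2 is invertible (2 ∉ m). Let y ∈ A satisfy 1 + y + y² + y³ + y⁴ = 0 and y − 1 ∈ m. Let u ∈ A⟦t⟧ be a power series with u² = t² + y whose constant coefficient is congruent to 1 modulo m (so u is a unit of A⟦t⟧), and set σ := t·u⁻¹ ∈ A⟦t⟧. Then the five-fold composite σ ∘ σ ∘ σ ∘ σ ∘ σ (under substitution of power series) equals t; that is, σ has order dividing 5 under composition. -/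
/-
Write `σ⁽ⁿ⁾` for the `n`-fold composite of `σ`. Since `σ = t/u` with `u² = t² + y`, induction on `n`
gives `σ⁽ⁿ⁾ · wₙ = t` with `wₙ² = (1 + y + ⋯ + yⁿ⁻¹) t² + yⁿ`: on squares, `σ` acts on `t²` as the
Möbius map `T ↦ T/(T + y)`. For `n = 5` the relation `1 + y + y² + y³ + y⁴ = 0` makes `w₅² = 1`,
while `w₅ ≡ 1` modulo the maximal ideal (its constant coefficient is `u(0)⁵`), so `w₅ + 1` is a
unit (as `2` is) and `w₅ = 1`.
-/

open PowerSeries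

open IsLocalRing

theorem IsLocalRing.isUnit_of_sub_mem_maximalIdeal {R : Type*} [CommRing R] [IsLocalRing R]
    {x z : R} (hz : IsUnit z) (h : x - z ∈ maximalIdeal R) : IsUnit x := by
  rw [← notMem_maximalIdeal] at hz ⊢
  intro hx
  exact hz (by simpa using sub_mem hx h)

section

variable {A : Type*} [CommRing A]

theorem PowerSeries.constantCoeff_subst_of_constantCoeff_eq_zero (f : A⟦X⟧) {g : A⟦X⟧}
    (hg : constantCoeff g = 0) : constantCoeff (f.subst g) = constantCoeff f := by
  rw [← coeff_zero_eq_constantCoeff_apply, coeff_subst' (HasSubst.of_constantCoeff_zero' hg),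
    finsum_eq_single _ 0]
  · simp
  · intro d hd
    simp [hg, hd]

section Iterate

variable {y : A} {u σ : A⟦X⟧}

theorem constantCoeff_iterate_pscomp (hσ0 : constantCoeff σ = 0) (n : ℕ) :
    constantCoeff ((pscomp σ)^[n] X) = 0 := by
  induction n with
  | zero => exact constantCoeff_X
  | succ n ih =>
    rw [Function.iterate_succ_apply', pscomp_eq_subst _ (HasSubst.of_constantCoeff_zero' ih)]
    exact constantCoeff_subst_eq_zero ih σ hσ0

theorem exists_iterate_pscomp_mul_eq_X (hu : u ^ 2 = X ^ 2 + C y) (hσ : σ * u = X)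
    (hσ0 : constantCoeff σ = 0) (n : ℕ) :
    ∃ w : A⟦X⟧, (pscomp σ)^[n] X * w = X ∧
      w ^ 2 = C (∑ i ∈ Finset.range n, y ^ i) * X ^ 2 + C (y ^ n) ∧
      constantCoeff w = constantCoeff u ^ n := by
  induction n with
  | zero => exact ⟨1, by simp⟩
  | succ n ih =>
    obtain ⟨w, hsw, hw, hw0⟩ := ih
    set s := (pscomp σ)^[n] X
    have hs : HasSubst s := HasSubst.of_constantCoeff_zero' (constantCoeff_iterate_pscomp hσ0 n)
    refine ⟨u.subst s * w, ?_, ?_, ?_⟩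
    · rw [Function.iterate_succ_apply', pscomp_eq_subst _ hs, ← mul_assoc, ← subst_mul hs, hσ,
        subst_X hs, hsw]
    · have hus : u.subst s ^ 2 = s ^ 2 + C y := by
        rw [← subst_pow hs, hu, subst_add hs, subst_pow hs, subst_X hs, subst_C]
        rfl
      rw [mul_pow, hus, add_mul, ← mul_pow, hsw, hw, geom_sum_succ, pow_succ']
      simp only [map_add, map_mul, map_one, map_pow]
      ring
    · rw [map_mul, hw0, pow_succ',
        constantCoeff_subst_of_constantCoeff_eq_zero _ (constantCoeff_iterate_pscomp hσ0 n)]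

end Iterate

theorem PowerSeries.eq_one_of_sq_eq_one_of_constantCoeff_sub_one_mem [IsLocalRing A]
    (h2 : IsUnit (2 : A)) {w : A⟦X⟧} (hw : w ^ 2 = 1)
    (hw0 : constantCoeff w - 1 ∈ maximalIdeal A) : w = 1 := by
  have hunit : IsUnit (w + 1) := by
    refine isUnit_iff_constantCoeff.2 (isUnit_of_sub_mem_maximalIdeal h2 ?_)
    convert hw0 using 1
    rw [map_add, map_one]
    ring
  have hfactor : (w - 1) * (w + 1) = 0 := by linear_combination hw
  exact sub_eq_zero.1 (hunit.mul_left_eq_zero.1 hfactor)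

end

theorem sigma_has_order_dividing_five_general {A : Type*} [CommRing A] [IsLocalRing A]
    (h2 : IsUnit (2 : A)) (y : A)
    (hy : 1 + y + y ^ 2 + y ^ 3 + y ^ 4 = 0)
    (u σ : PowerSeries A) (hu : u ^ 2 = X ^ 2 + C y)
    (hu0 : constantCoeff u - 1 ∈ IsLocalRing.maximalIdeal A)
    (hσ : σ * u = X) :
    pscomp σ (pscomp σ (pscomp σ (pscomp σ σ))) = X := by
  have hσ0 : constantCoeff σ = 0 := by
    have hc : IsUnit (constantCoeff u) := isUnit_of_sub_mem_maximalIdeal isUnit_one hu0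
    simpa [hc.mul_left_eq_zero] using congrArg constantCoeff hσ
  obtain ⟨w, hsw, hw, hw0⟩ := exists_iterate_pscomp_mul_eq_X hu hσ hσ0 5
  have hgeom : ∑ i ∈ Finset.range 5, y ^ i = 0 := by
    simp only [Finset.sum_range_succ, Finset.sum_range_zero]
    linear_combination hy
  have hy5 : y ^ 5 = 1 := by linear_combination (y - 1) * hy
  have hw1 : w = 1 := by
    refine eq_one_of_sq_eq_one_of_constantCoeff_sub_one_mem h2 (by simpa [hgeom, hy5] using hw) ?_
    rw [hw0]
    exact Ideal.mem_of_dvd _ (sub_one_dvd_pow_sub_one _ 5) hu0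
  have hX : pscomp σ X = σ := by rw [pscomp_eq_subst _ HasSubst.X', X_subst]
  calc pscomp σ (pscomp σ (pscomp σ (pscomp σ σ)))
      = (pscomp σ)^[5] X := by rw [Function.iterate_succ_apply, hX]; rfl
    _ = X := by simpa [hw1] using hsw

theorem sigma_has_order_dividing_five {A : Type*} [CommRing A] [IsLocalRing A]
    (h2 : IsUnit (2 : A)) (y : A)
    (hy : 1 + y + y ^ 2 + y ^ 3 + y ^ 4 = 0)
    (hym : y - 1 ∈ IsLocalRing.maximalIdeal A)
    (u σ : PowerSeries A) (hu : u ^ 2 = X ^ 2 + C y)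
    (hu0 : constantCoeff u - 1 ∈ IsLocalRing.maximalIdeal A)
    (hσ : σ * u = X) :
    pscomp σ (pscomp σ (pscomp σ (pscomp σ σ))) = X :=
  sigma_has_order_dividing_five_general h2 y hy u σ hu hu0 hσ
end

section
/- Let k be a field of characteristic 5 and let u ∈ k⟦t⟧ be the unique power series with u² = t² + 1 and constant coefficient u(0) = 1. Set σ := t·u⁻¹ ∈ k⟦t⟧. Then: (a) the five-fold composite σ ∘ σ ∘ σ ∘ σ ∘ σ under substitution equals t, while σ ≠ t; hence σ generates a cyclic group of order exactly 5 of continuous k-algebra automorphisms of k⟦t⟧; and (b) the t-adic order of σ/t − 1 = u⁻¹ − 1 equals 2 (i.e., σ has Hasse conductor ord_t(σ(t)/t − 1) = 2). -/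
open PowerSeries

/-!
For `c ∈ k` let `σ_c = t / √(1 + c t²)`, the square root normalised so that `σ_c'(0) = 1`;
it is the unique series with `σ_c'(0) = 1` and `σ_c² (1 + c t²) = t²`. Substituting `σ_d` into
this identity for `σ_c` gives `σ_c ∘ σ_d = σ_{c+d}`, so `c ↦ σ_c` is a homomorphism from the
additive group of `k`. Since `σ = σ_1`, its five-fold composite is `σ_5 = σ_0 = t` in
characteristic `5`. For the conductor, `(u - 1)(u + 1) = t²` with `u + 1` a unit.
-/

namespace PowerSeries

variable {R : Type*} [CommRing R]

theorem pscomp_eq_subst {f g : R⟦X⟧} (hg : HasSubst g) : pscomp f g = f.subst g := by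
  ext n
  simp [pscomp, coeff_subst' hg]

theorem coeff_one_subst {a : R⟦X⟧} (ha : constantCoeff a = 0) (f : R⟦X⟧) :
    coeff 1 (f.subst a) = coeff 1 f * coeff 1 a := by
  rw [coeff_subst' (HasSubst.of_constantCoeff_zero' ha), finsum_eq_single _ 1, pow_one,
    smul_eq_mul]
  intro d hd
  rcases Nat.lt_or_gt_of_ne hd with hd | hd
  · simp [Nat.lt_one_iff.mp hd, coeff_one]
  · rw [X_pow_dvd_iff.mp (pow_dvd_pow_of_dvd (X_dvd_iff.mpr ha) d) 1 hd, smul_zero]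

structure IsXDivSqrt (c : R) (a : R⟦X⟧) : Prop where
  constantCoeff_eq : constantCoeff a = 0
  coeff_one_eq : coeff 1 a = 1
  sq_mul : a ^ 2 * (C c * X ^ 2 + 1) = X ^ 2

theorem isXDivSqrt_zero_X : IsXDivSqrt (0 : R) X where
  constantCoeff_eq := constantCoeff_X
  coeff_one_eq := coeff_one_X
  sq_mul := by simp

theorem isXDivSqrt_one_of_mul_eq_X {u σ : R⟦X⟧} (hu : u ^ 2 = X ^ 2 + 1)
    (hu0 : constantCoeff u = 1) (hσ : σ * u = X) : IsXDivSqrt 1 σ := by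
  have hσ0 : constantCoeff σ = 0 := by simpa [hu0] using congrArg constantCoeff hσ
  refine ⟨hσ0, ?_, ?_⟩
  · simpa [coeff_mul, Finset.Nat.antidiagonal_succ, hu0, hσ0] using congrArg (coeff 1) hσ
  · rw [map_one, one_mul]
    linear_combination (σ * u + X) * hσ - σ ^ 2 * hu

namespace IsXDivSqrt

variable {c d : R} {f a : R⟦X⟧}

theorem subst (hf : IsXDivSqrt c f) (ha : IsXDivSqrt d a) :
    IsXDivSqrt (c + d) (f.subst a) where
  constantCoeff_eq := constantCoeff_subst_eq_zero ha.constantCoeff_eq f hf.constantCoeff_eq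
  coeff_one_eq := by
    rw [coeff_one_subst ha.constantCoeff_eq, hf.coeff_one_eq, ha.coeff_one_eq, one_mul]
  sq_mul := by
    have hsub := HasSubst.of_constantCoeff_zero' ha.constantCoeff_eq
    have h := congrArg (substAlgHom hsub) hf.sq_mul
    simp only [map_mul, map_pow, map_add, map_one, coe_substAlgHom, subst_X hsub, subst_C] at h
    change f.subst a ^ 2 * (C c * a ^ 2 + 1) = a ^ 2 at h
    rw [map_add]
    linear_combination (C d * X ^ 2 + 1) * h - (f.subst a ^ 2 * C c - 1) * ha.sq_mul

theorem pscomp (hf : IsXDivSqrt c f) (ha : IsXDivSqrt d a) :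
    IsXDivSqrt (c + d) (pscomp f a) := by
  rw [pscomp_eq_subst (HasSubst.of_constantCoeff_zero' ha.constantCoeff_eq)]
  exact hf.subst ha

theorem unique [IsDomain R] (h2 : (2 : R) ≠ 0) {b : R⟦X⟧} (ha : IsXDivSqrt c a)
    (hb : IsXDivSqrt c b) : a = b := by
  have hne : (C c * X ^ 2 + 1 : R⟦X⟧) ≠ 0 := fun h => by simpa using congrArg constantCoeff h
  rcases sq_eq_sq_iff_eq_or_eq_neg.mp (mul_right_cancel₀ hne (ha.sq_mul.trans hb.sq_mul.symm))
    with h | h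
  · exact h
  · have h1 := congrArg (coeff 1) h
    rw [map_neg, ha.coeff_one_eq, hb.coeff_one_eq] at h1
    exact absurd (by linear_combination h1) h2

theorem param_eq [IsDomain R] (hc : IsXDivSqrt c a) (hd : IsXDivSqrt d a) : c = d := by
  have ha : a ≠ 0 := fun h => by simpa [h] using hc.coeff_one_eq
  have h := mul_left_cancel₀ (pow_ne_zero 2 ha) (hc.sq_mul.trans hd.sq_mul.symm)
  simpa using congrArg (coeff 2) h

end IsXDivSqrt

theorem order_sub_one_eq_two [IsDomain R] (h2 : (2 : R) ≠ 0) {u : R⟦X⟧}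
    (hu : u ^ 2 = X ^ 2 + 1) (hu0 : constantCoeff u = 1) : (u - 1).order = 2 := by
  have hplus : (u + 1).order = 0 := by
    by_contra h
    exact h2 (by simpa [hu0, one_add_one_eq_two] using order_ne_zero_iff_constCoeff_eq_zero.mp h)
  have h := order_mul (u - 1) (u + 1)
  rw [show (u - 1) * (u + 1) = X ^ 2 by linear_combination hu, order_X_pow, hplus,
    add_zero] at h
  exact_mod_cast h.symm

theorem order_inv_sub_one {k : Type*} [Field k] {u : k⟦X⟧} (hu : constantCoeff u ≠ 0) :
    (u⁻¹ - 1).order = (u - 1).order := by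
  have hunit : IsUnit u⁻¹ := by simp [isUnit_iff_constantCoeff, hu]
  rw [show u⁻¹ - 1 = (u - 1) * -u⁻¹ by linear_combination PowerSeries.mul_inv_cancel u hu,
    order_mul, order_zero_of_unit hunit.neg, add_zero]

end PowerSeries

theorem order_five_conductor_two {k : Type*} [Field k] [CharP k 5]
    (u σ : PowerSeries k) (hu : u ^ 2 = X ^ 2 + 1)
    (hu0 : constantCoeff u = 1) (hσ : σ * u = X) :
    (pscomp σ (pscomp σ (pscomp σ (pscomp σ σ))) = X ∧ σ ≠ X) ∧
      (u⁻¹ - 1).order = 2 := by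
  have h2 : (2 : k) ≠ 0 := fun h =>
    absurd ((CharP.cast_eq_zero_iff k 5 2).mp (by exact_mod_cast h)) (by norm_num)
  have hσ1 : IsXDivSqrt 1 σ := isXDivSqrt_one_of_mul_eq_X hu hu0 hσ
  have hσ5 := hσ1.pscomp (hσ1.pscomp (hσ1.pscomp (hσ1.pscomp hσ1)))
  rw [show (1 : k) + (1 + (1 + (1 + 1))) = 0 by linear_combination CharP.cast_eq_zero k 5] at hσ5
  refine ⟨⟨hσ5.unique h2 isXDivSqrt_zero_X, fun h => ?_⟩, ?_⟩
  · exact one_ne_zero (hσ1.param_eq (h ▸ isXDivSqrt_zero_X))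
  · rw [order_inv_sub_one (by simp [hu0]), order_sub_one_eq_two h2 hu hu0]
end
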